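/- For all integers n ≥ 0 and k ≥ 1, the Daehee number of the second kind of order k satisfies D̂_n^(k) = Σ_{l=0}^n (−1)^{n−l} S_1(n,l) B_l^{(k)}, where S_1 denotes the signed Stirling numbers of the first kind (so (−1)^{n−l} S_1(n,l) is the unsigned Stirling number of the first kind) and B_l^{(k)} are the Bernoulli numbers of order k. -/

import Mathlib

/-!
Write `u = -log(1-t)`. Since `e^u = 1/(1-t)`, substituting `t ↦ u` into `t^k = (e^t-1)^k B(t)`
gives `u^k = (t/(1-t))^k B(u)`, so the defining identity of `D̂` becomes `D̂(t) = B(u)`, that is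
`D̂_n = Σ_l B_l^{(k)} · n! [t^n] u^l / l!`. Differentiating `u^{l+1}` and using `(1-t) u' = 1`
shows that `n! [t^n] u^l / l!` satisfies the recurrence of the unsigned Stirling numbers of the
first kind, which are the coefficients of `x(x-1)⋯(x-n+1)` up to the sign `(-1)^{n-l}`.
-/

open PowerSeries Polynomial Finset

/-- `log(1+t) = Σ_{n≥1} (-1)^{n+1} t^n / n` as a formal power series over ℚ. -/
noncomputable def logOneAdd : PowerSeries ℚ :=
  PowerSeries.mk fun n => if n = 0 then 0 else (-1) ^ (n + 1) / (n : ℚ)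

/-- `−log(1−t) = Σ_{n≥1} t^n / n` as a formal power series over ℚ. -/
noncomputable def negLogOneSub : PowerSeries ℚ :=
  PowerSeries.mk fun n => if n = 0 then 0 else 1 / (n : ℚ)

/-- `e^t = Σ_{n≥0} t^n / n!` as a formal power series over ℚ. -/
noncomputable def expQ : PowerSeries ℚ :=
  PowerSeries.mk fun n => 1 / (n.factorial : ℚ)

/-- `log(1+t)` as a formal power series with coefficients in ℚ[x]. -/
noncomputable def logOneAddP : PowerSeries (Polynomial ℚ) :=
  PowerSeries.mk fun n => Polynomial.C (if n = 0 then 0 else (-1) ^ (n + 1) / (n : ℚ))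

/-- `−log(1−t)` as a formal power series with coefficients in ℚ[x]. -/
noncomputable def negLogOneSubP : PowerSeries (Polynomial ℚ) :=
  PowerSeries.mk fun n => Polynomial.C (if n = 0 then 0 else 1 / (n : ℚ))

/-- `e^t` as a formal power series with coefficients in ℚ[x]. -/
noncomputable def expP : PowerSeries (Polynomial ℚ) :=
  PowerSeries.mk fun n => Polynomial.C (1 / (n.factorial : ℚ))

/-- `e^{xt} = Σ_{n≥0} x^n t^n / n!` as a formal power series with coefficients in ℚ[x]. -/
noncomputable def expXT : PowerSeries (Polynomial ℚ) :=
  PowerSeries.mk fun n => Polynomial.C (1 / (n.factorial : ℚ)) * Polynomial.X ^ n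

/-- The binomial polynomial `x(x−1)⋯(x−n+1)/n! ∈ ℚ[x]`. -/
noncomputable def binomPoly (n : ℕ) : Polynomial ℚ :=
  Polynomial.C (1 / (n.factorial : ℚ)) *
    ∏ i ∈ Finset.range n, (Polynomial.X - Polynomial.C (i : ℚ))

/-- `(1+t)^x = Σ_{n≥0} C(x,n) t^n` as a formal power series with coefficients in ℚ[x]. -/
noncomputable def onePlusTX : PowerSeries (Polynomial ℚ) :=
  PowerSeries.mk binomPoly

/-- `(1−t)^x = Σ_{n≥0} (−1)^n C(x,n) t^n` as a formal power series with coefficients in ℚ[x]. -/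
noncomputable def oneSubTX : PowerSeries (Polynomial ℚ) :=
  PowerSeries.mk fun n => (-1) ^ n * binomPoly n

open scoped Nat

namespace Polynomial

theorem coeff_descPochhammer_int (n k : ℕ) :
    (descPochhammer ℤ n).coeff k = (-1) ^ (n - k) * (Nat.stirlingFirst n k : ℤ) := by
  induction n generalizing k with
  | zero => cases k <;> simp [coeff_one]
  | succ n ih =>
    rw [descPochhammer_succ_right, mul_sub, ← C_eq_natCast, coeff_sub, coeff_mul_C]
    cases k with
    | zero => cases n <;> simp [ih]
    | succ k =>
      rw [coeff_mul_X, ih, ih, Nat.stirlingFirst_succ_succ]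
      rcases lt_or_ge k n with hkn | hnk
      · rw [show n - k = n - (k + 1) + 1 by omega, show n + 1 - (k + 1) = n - (k + 1) + 1 by omega]
        push_cast
        ring
      · simp [Nat.stirlingFirst_eq_zero_of_lt (Nat.lt_succ_of_le hnk),
          show n + 1 - (k + 1) = n - k by omega]

theorem coeff_descPochhammer {R : Type*} [Ring R] (n k : ℕ) :
    (descPochhammer R n).coeff k = (-1) ^ (n - k) * (Nat.stirlingFirst n k : R) := by
  rw [← descPochhammer_map (Int.castRingHom R), coeff_map, coeff_descPochhammer_int]
  simp

theorem descPochhammer_eq_prod_range {R : Type*} [CommRing R] (n : ℕ) :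
    descPochhammer R n = ∏ i ∈ range n, (X - C (i : R)) := by
  induction n with
  | zero => simp
  | succ n ih => rw [prod_range_succ, ← ih, descPochhammer_succ_right, C_eq_natCast]

end Polynomial

namespace PowerSeries

theorem coeff_pow_eq_zero_of_lt {R : Type*} [CommRing R] {b : R⟦X⟧} (hb : constantCoeff b = 0)
    {n d : ℕ} (h : n < d) : coeff n (b ^ d) = 0 :=
  X_pow_dvd_iff.mp (pow_dvd_pow_of_dvd (X_dvd_iff.mpr hb) d) n h

theorem coeff_subst_eq_sum_range {R : Type*} [CommRing R] {b : R⟦X⟧} (hb : constantCoeff b = 0)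
    (f : R⟦X⟧) (n : ℕ) :
    coeff n (f.subst b) = ∑ d ∈ range (n + 1), coeff d f * coeff n (b ^ d) := by
  rw [coeff_subst' (HasSubst.of_constantCoeff_zero' hb)]
  refine finsum_eq_sum_of_support_subset _ fun d hd => ?_
  rw [coe_range, Set.mem_Iio]
  by_contra! hnd
  exact hd (by simp [coeff_pow_eq_zero_of_lt hb hnd])

theorem coeff_X_mul_derivative {R : Type*} [CommRing R] (f : R⟦X⟧) (n : ℕ) :
    coeff n (X * d⁄dX R f) = n * coeff n f := by
  cases n with
  | zero => simp
  | succ n => rw [coeff_succ_X_mul, coeff_derivative, mul_comm]; push_cast; ring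

theorem constantCoeff_negLogOneSub : constantCoeff negLogOneSub = 0 := by
  simp [negLogOneSub, ← coeff_zero_eq_constantCoeff_apply]

theorem one_sub_X_mul_derivative_negLogOneSub : (1 - X) * d⁄dX ℚ negLogOneSub = 1 := by
  have hderiv : d⁄dX ℚ negLogOneSub = mk 1 := by
    ext n
    rw [coeff_derivative, negLogOneSub, coeff_mk, coeff_mk, if_neg n.succ_ne_zero]
    push_cast
    field_simp
    rfl
  rw [hderiv, mul_comm, mk_one_mul_one_sub_eq_one]

theorem coeff_succ_negLogOneSub_pow_succ (n l : ℕ) :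
    (n + 1) * coeff (n + 1) (negLogOneSub ^ (l + 1))
      = n * coeff n (negLogOneSub ^ (l + 1)) + (l + 1) * coeff n (negLogOneSub ^ l) := by
  have hode : (1 - X) * d⁄dX ℚ (negLogOneSub ^ (l + 1))
      = C ((l + 1 : ℕ) : ℚ) * negLogOneSub ^ l := by
    rw [derivative_pow, Nat.add_sub_cancel, map_natCast]
    linear_combination ((l + 1 : ℕ) * negLogOneSub ^ l) * one_sub_X_mul_derivative_negLogOneSub
  have hcoeff := congrArg (coeff n) hode
  rw [sub_mul, one_mul, map_sub, coeff_X_mul_derivative, coeff_derivative, coeff_C_mul] at hcoeff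
  push_cast at hcoeff
  linear_combination hcoeff

theorem factorial_mul_coeff_negLogOneSub_pow (n l : ℕ) :
    (n ! : ℚ) * coeff n (negLogOneSub ^ l) = l ! * Nat.stirlingFirst n l := by
  induction n generalizing l with
  | zero => cases l <;> simp [constantCoeff_negLogOneSub]
  | succ n ih =>
    cases l with
    | zero => simp [coeff_one]
    | succ l =>
      have ih' := ih (l + 1)
      rw [Nat.factorial_succ] at ih'
      rw [Nat.stirlingFirst_succ_succ, Nat.factorial_succ, Nat.factorial_succ]
      push_cast at ih' ⊢
      linear_combination (n ! : ℚ) * coeff_succ_negLogOneSub_pow_succ n l + n * ih' + (l + 1) * ih l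

theorem one_sub_X_mul_exp_subst_negLogOneSub : (1 - X) * (exp ℚ).subst negLogOneSub = 1 := by
  have hu := HasSubst.of_constantCoeff_zero' constantCoeff_negLogOneSub
  refine derivative.ext ?_ ?_
  · rw [Derivation.leibniz, derivative_subst hu, derivative_exp, map_sub,
      Derivation.map_one_eq_zero, derivative_X, smul_eq_mul, smul_eq_mul]
    linear_combination (exp ℚ).subst negLogOneSub * one_sub_X_mul_derivative_negLogOneSub
  · rw [map_mul, ← coeff_zero_eq_constantCoeff_apply ((exp ℚ).subst _),
      coeff_subst_eq_sum_range constantCoeff_negLogOneSub]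
    simp

theorem expQ_eq_exp : expQ = exp ℚ := by
  ext n
  simp [expQ]

end PowerSeries

theorem daehee_second_kind_eq_unsigned_stirling_bernoulli_sum_general
    (k : ℕ) (n : ℕ)
    (Dh : ℕ → ℚ)
    (hDh : ((1 - PowerSeries.X) * negLogOneSub) ^ k
      = PowerSeries.X ^ k * PowerSeries.mk (fun m => Dh m / (m.factorial : ℚ)))
    (S1 : ℕ → ℕ → ℤ)
    (hS1 : ∀ m : ℕ,
      (∏ i ∈ Finset.range m, (Polynomial.X - Polynomial.C (i : ℚ)))
        = ∑ l ∈ Finset.range (m + 1), Polynomial.C ((S1 m l : ℚ)) * Polynomial.X ^ l)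
    (B : ℕ → ℚ)
    (hB : (PowerSeries.X : PowerSeries ℚ) ^ k
      = (expQ - 1) ^ k * PowerSeries.mk (fun m => B m / (m.factorial : ℚ))) :
    Dh n = ∑ l ∈ Finset.range (n + 1), (-1 : ℚ) ^ (n - l) * (S1 n l : ℚ) * B l := by
  set Bs := PowerSeries.mk fun m => B m / (m.factorial : ℚ)
  have hu := HasSubst.of_constantCoeff_zero' constantCoeff_negLogOneSub
  have hBu := congrArg (substAlgHom hu) hB
  simp only [map_pow, map_mul, map_sub, map_one, substAlgHom_X, coe_substAlgHom, expQ_eq_exp] at hBu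
  have hexp : (1 - PowerSeries.X) * ((exp ℚ).subst negLogOneSub - 1) = PowerSeries.X := by
    linear_combination one_sub_X_mul_exp_subst_negLogOneSub
  have hD : PowerSeries.mk (fun m => Dh m / (m.factorial : ℚ)) = Bs.subst negLogOneSub := by
    refine mul_left_cancel₀ (pow_ne_zero k PowerSeries.X_ne_zero) ?_
    rw [← hDh, mul_pow, hBu, ← mul_assoc, ← mul_pow, hexp]
  have hS (l : ℕ) (hl : l ∈ Finset.range (n + 1)) :
      (S1 n l : ℚ) = (-1) ^ (n - l) * Nat.stirlingFirst n l := by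
    rw [← Polynomial.coeff_descPochhammer, Polynomial.descPochhammer_eq_prod_range, hS1,
      Polynomial.finsetSum_coeff]
    simp [hl]
  have hcoeff := congrArg (PowerSeries.coeff n) hD
  rw [coeff_mk, coeff_subst_eq_sum_range constantCoeff_negLogOneSub,
    div_eq_iff (by positivity), sum_mul] at hcoeff
  rw [hcoeff]
  refine sum_congr rfl fun l hl => ?_
  rw [hS l hl, coeff_mk, mul_assoc, mul_comm (PowerSeries.coeff n _),
    factorial_mul_coeff_negLogOneSub_pow, ← mul_assoc ((-1) ^ (n - l)), ← mul_pow, neg_one_mul,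
    neg_neg, one_pow, one_mul]
  field_simp

/-- For `n ≥ 0`, `k ≥ 1`, the Daehee numbers of the second kind of order
`k`, defined by `((1−t)log(1−t)/(−t))^k = Σ_n D̂_n^(k) t^n/n!` (encoded multiplicatively as
`((1−t)·(−log(1−t)))^k = t^k · Σ_n D̂_n^(k) t^n/n!`), satisfy
`D̂_n^(k) = Σ_{l=0}^n (−1)^{n−l} S_1(n,l) B_l^{(k)}`. -/
theorem daehee_second_kind_eq_unsigned_stirling_bernoulli_sum
    (k : ℕ) (hk : 1 ≤ k) (n : ℕ)
    (Dh : ℕ → ℚ)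
    (hDh : ((1 - PowerSeries.X) * negLogOneSub) ^ k
      = PowerSeries.X ^ k * PowerSeries.mk (fun m => Dh m / (m.factorial : ℚ)))
    (S1 : ℕ → ℕ → ℤ)
    (hS1 : ∀ m : ℕ,
      (∏ i ∈ Finset.range m, (Polynomial.X - Polynomial.C (i : ℚ)))
        = ∑ l ∈ Finset.range (m + 1), Polynomial.C ((S1 m l : ℚ)) * Polynomial.X ^ l)
    (B : ℕ → ℚ)
    (hB : (PowerSeries.X : PowerSeries ℚ) ^ k
      = (expQ - 1) ^ k * PowerSeries.mk (fun m => B m / (m.factorial : ℚ))) :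
    Dh n = ∑ l ∈ Finset.range (n + 1), (-1 : ℚ) ^ (n - l) * (S1 n l : ℚ) * B l :=
  daehee_second_kind_eq_unsigned_stirling_bernoulli_sum_general k n Dh hDh S1 hS1 B hB
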